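/- arXiv:1608.00171 — 3 statements merged into one kernel-verified Lean document; each statement's English description precedes it below -/
import Mathlib

section
/- Let R be a commutative ring with total quotient ring T(R), and let r ∈ R. The canonical ring homomorphism R[ρ] → T(R)[ρ] induced by R → T(R) (where T(R)[ρ] = T(R)[T]/(T(T−r))) exhibits T(R)[ρ] as the total quotient ring of R[ρ]; that is, T(R)[ρ] is the localization of R[ρ] at the multiplicative set of non-zerodivisors of R[ρ]. -/
/-!
Every element of `S[ρ]` is uniquely `a + bρ`, and since `ρ² = sρ` it has the conjugate
`a + sb - bρ` with `(a + bρ)(a + sb - bρ) = a(a + sb)`. If `a + bρ` is a non-zerodivisor, so is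
this norm `a(a + sb)` in `S`: an `x` killing it makes `x` kill the conjugate, hence,
coordinatewise, also `a + bρ`. Thus a non-zerodivisor of `R[ρ]` divides the image of a
non-zerodivisor of `R`, so it becomes a unit in `T(R)[ρ]`. Conversely, clearing the denominators
of the two coordinates of an element of `T(R)[ρ]` takes a non-zerodivisor of `R`, which stays
one in the free `R`-module `R[ρ]`.
-/

open Polynomial

/-- The ring `S[ρ] = S[T]/(T(T−s))`. -/
abbrev RhoRing (S : Type*) [CommRing S] (s : S) : Type _ :=
  Polynomial S ⧸ Ideal.span {(X * (X - Polynomial.C s) : Polynomial S)}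

open scoped nonZeroDivisors

namespace RhoRing

section
variable {S : Type*} [CommRing S] {s : S}

lemma monic_X_mul_X_sub_C (s : S) : (X * (X - C s)).Monic := monic_X.mul (monic_X_sub_C s)

lemma natDegree_X_mul_X_sub_C [Nontrivial S] (s : S) : (X * (X - C s)).natDegree = 2 := by
  compute_degree!

noncomputable def root (s : S) : RhoRing S s := Ideal.Quotient.mk _ X

lemma mk_C_mul_X_add_C (a b : S) :
    (Ideal.Quotient.mk _ (C a * X + C b) : RhoRing S s) =
      algebraMap S _ b + algebraMap S _ a * root s := by
  rw [map_add, map_mul, add_comm]; rfl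

lemma root_mul_root : root s * root s = algebraMap S _ s * root s := by
  have h : Ideal.Quotient.mk (Ideal.span {X * (X - C s)}) (X * (X - C s)) = 0 :=
    Ideal.Quotient.eq_zero_iff_mem.2 (Ideal.mem_span_singleton_self _)
  rw [map_mul, map_sub] at h
  change Ideal.Quotient.mk _ X * Ideal.Quotient.mk _ X =
    Ideal.Quotient.mk _ (C s) * Ideal.Quotient.mk _ X
  linear_combination h

lemma exists_eq_add_mul_root (z : RhoRing S s) :
    ∃ a b : S, z = algebraMap S _ a + algebraMap S _ b * root s := by
  nontriviality S
  obtain ⟨p, rfl⟩ := Ideal.Quotient.mk_surjective z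
  have hdeg : (p %ₘ (X * (X - C s))).natDegree ≤ 1 := by
    have hne : X * (X - C s) ≠ 1 := fun h => by simpa [h] using natDegree_X_mul_X_sub_C s
    have := natDegree_modByMonic_lt p (monic_X_mul_X_sub_C s) hne
    rwa [natDegree_X_mul_X_sub_C, Nat.lt_succ_iff] at this
  obtain ⟨b, a, hab⟩ := exists_eq_X_add_C_of_natDegree_le_one hdeg
  refine ⟨a, b, ?_⟩
  rw [← mk_C_mul_X_add_C, ← hab, Ideal.Quotient.mk_eq_mk_iff_sub_mem, Ideal.mem_span_singleton]
  exact ⟨p /ₘ (X * (X - C s)),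
    by linear_combination (modByMonic_add_div p (X * (X - C s))).symm⟩

lemma add_mul_root_eq_zero_iff {a b : S} :
    algebraMap S (RhoRing S s) a + algebraMap S _ b * root s = 0 ↔ a = 0 ∧ b = 0 := by
  refine ⟨fun h => ?_, fun ⟨ha, hb⟩ => by simp [ha, hb]⟩
  nontriviality S
  rw [← mk_C_mul_X_add_C, Ideal.Quotient.eq_zero_iff_mem, Ideal.mem_span_singleton] at h
  have hlin : C b * X + C a = 0 := by
    by_contra hne
    refine (monic_X_mul_X_sub_C s).not_dvd_of_degree_lt hne ?_ h
    rw [degree_eq_natDegree (monic_X_mul_X_sub_C s).ne_zero, natDegree_X_mul_X_sub_C]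
    exact degree_linear_le.trans_lt (by norm_num)
  exact ⟨by simpa using congr_arg (coeff · 0) hlin, by simpa using congr_arg (coeff · 1) hlin⟩

lemma algebraMap_injective : Function.Injective (algebraMap S (RhoRing S s)) := by
  refine (injective_iff_map_eq_zero _).2 fun a ha => ?_
  simpa using (add_mul_root_eq_zero_iff (s := s) (b := 0)).1 (by simpa using ha)

lemma algebraMap_mul_add_mul_root (x a b : S) :
    algebraMap S (RhoRing S s) x * (algebraMap S _ a + algebraMap S _ b * root s) =
      algebraMap S _ (x * a) + algebraMap S _ (x * b) * root s := by
  simp only [map_mul]; ring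

lemma algebraMap_mem_nonZeroDivisors {u : S} (hu : u ∈ S⁰) :
    algebraMap S (RhoRing S s) u ∈ (RhoRing S s)⁰ := by
  refine mem_nonZeroDivisors_iff_left.2 fun z hz => ?_
  obtain ⟨a, b, rfl⟩ := exists_eq_add_mul_root z
  rw [algebraMap_mul_add_mul_root, add_mul_root_eq_zero_iff] at hz
  rw [add_mul_root_eq_zero_iff]
  exact ⟨mem_nonZeroDivisors_iff_left.1 hu _ hz.1, mem_nonZeroDivisors_iff_left.1 hu _ hz.2⟩

lemma add_mul_root_mul_conj (a b : S) :
    (algebraMap S (RhoRing S s) a + algebraMap S _ b * root s) *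
        (algebraMap S _ (a + s * b) + algebraMap S _ (-b) * root s) =
      algebraMap S _ (a * (a + s * b)) := by
  simp only [map_mul, map_add, map_neg]
  linear_combination (-(algebraMap S (RhoRing S s) b) ^ 2) * root_mul_root (s := s)

lemma exists_mul_eq_algebraMap_of_mem_nonZeroDivisors {z : RhoRing S s}
    (hz : z ∈ (RhoRing S s)⁰) :
    ∃ z' : RhoRing S s, ∃ n ∈ S⁰, z * z' = algebraMap S _ n := by
  obtain ⟨a, b, rfl⟩ := exists_eq_add_mul_root z
  set z' : RhoRing S s := algebraMap S _ (a + s * b) + algebraMap S _ (-b) * root s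
  refine ⟨z', a * (a + s * b), mem_nonZeroDivisors_iff_right.2 fun x hx => ?_,
    add_mul_root_mul_conj a b⟩
  have hconj : algebraMap S (RhoRing S s) x * z' = 0 := by
    refine mem_nonZeroDivisors_iff_right.1 hz _ ?_
    rw [mul_assoc, mul_comm z', add_mul_root_mul_conj, ← map_mul, hx, map_zero]
  rw [algebraMap_mul_add_mul_root, add_mul_root_eq_zero_iff] at hconj
  have hz0 :
      algebraMap S (RhoRing S s) x * (algebraMap S _ a + algebraMap S _ b * root s) = 0 := by
    rw [algebraMap_mul_add_mul_root, add_mul_root_eq_zero_iff]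
    constructor
    · linear_combination hconj.1 + s * hconj.2
    · linear_combination -hconj.2
  have hx0 : algebraMap S (RhoRing S s) x = 0 := mem_nonZeroDivisors_iff_right.1 hz _ hz0
  exact algebraMap_injective (hx0.trans (map_zero _).symm)

end

section map
variable {S S' : Type*} [CommRing S] [CommRing S'] (f : S →+* S') (s : S)

noncomputable def map : RhoRing S s →+* RhoRing S' (f s) :=
  Ideal.quotientMap _ (mapRingHom f) <| (Ideal.span_singleton_le_iff_mem _).2 <| by
    rw [Ideal.mem_comap, coe_mapRingHom]
    simp [Polynomial.map_mul]

lemma map_mk (p : S[X]) : map f s (Ideal.Quotient.mk _ p) = Ideal.Quotient.mk _ (p.map f) :=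
  Ideal.quotientMap_mk

variable {s}

lemma map_algebraMap (a : S) : map f s (algebraMap S _ a) = algebraMap S' _ (f a) :=
  (map_mk f s (C a)).trans (by rw [map_C]; rfl)

lemma map_root : map f s (root s) = root (f s) :=
  (map_mk f s X).trans (by rw [map_X]; rfl)

lemma map_add_mul_root (a b : S) :
    map f s (algebraMap S _ a + algebraMap S _ b * root s) =
      algebraMap S' _ (f a) + algebraMap S' _ (f b) * root (f s) := by
  rw [map_add, map_mul, map_algebraMap, map_algebraMap, map_root]

variable {f}

lemma map_injective (hf : Function.Injective f) : Function.Injective (map f s) := by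
  refine (injective_iff_map_eq_zero _).2 fun z hz => ?_
  obtain ⟨a, b, rfl⟩ := exists_eq_add_mul_root z
  rw [map_add_mul_root, add_mul_root_eq_zero_iff, ← map_zero f] at hz
  rw [add_mul_root_eq_zero_iff]
  exact ⟨hf hz.1, hf hz.2⟩

lemma isUnit_map_of_mem_nonZeroDivisors (hf : ∀ u ∈ S⁰, IsUnit (f u)) {z : RhoRing S s}
    (hz : z ∈ (RhoRing S s)⁰) : IsUnit (map f s z) := by
  obtain ⟨z', n, hn, hzz'⟩ := exists_mul_eq_algebraMap_of_mem_nonZeroDivisors hz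
  refine isUnit_of_mul_isUnit_left (y := map f s z') ?_
  rw [← map_mul, hzz', map_algebraMap]
  exact (hf n hn).map _

end map

lemma exists_mul_algebraMap_eq_map {S S' : Type*} [CommRing S] [CommRing S'] [Algebra S S']
    {s : S} (M : Submonoid S) [IsLocalization M S'] (w : RhoRing S' (algebraMap S S' s)) :
    ∃ z : RhoRing S s, ∃ u ∈ M,
      w * algebraMap S' _ (algebraMap S S' u) = map (algebraMap S S') s z := by
  obtain ⟨α, β, rfl⟩ := exists_eq_add_mul_root w
  obtain ⟨u, hu⟩ := IsLocalization.exist_integer_multiples_of_finite M ![α, β]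
  obtain ⟨a, ha⟩ := hu 0
  obtain ⟨b, hb⟩ := hu 1
  refine ⟨algebraMap S _ a + algebraMap S _ b * root s, u, u.2, ?_⟩
  simp only [Matrix.cons_val_zero, Matrix.cons_val_one] at ha hb
  rw [map_add_mul_root, ha, hb, Algebra.smul_def, Algebra.smul_def]
  simp only [map_mul]; ring

end RhoRing

/-- The total quotient ring of `R[ρ] = R[T]/(T(T−r))` is
`T(R)[ρ] = T(R)[T]/(T(T−r))`: the canonical ring homomorphism `R[ρ] → T(R)[ρ]` induced
by the localization map `R → T(R)` is injective, sends every non-zerodivisor of `R[ρ]`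
to a unit, and every element of `T(R)[ρ]` is a quotient of an element of `R[ρ]` by a
non-zerodivisor of `R[ρ]`. -/
theorem rhoRing_totalQuotientRing (R : Type*) [CommRing R] (r : R) :
    ∃ φ : RhoRing R r →+* RhoRing (FractionRing R) (algebraMap R (FractionRing R) r),
      (∀ p : Polynomial R,
        φ (Ideal.Quotient.mk _ p) =
          Ideal.Quotient.mk _ (p.map (algebraMap R (FractionRing R)))) ∧
      Function.Injective φ ∧
      (∀ z ∈ nonZeroDivisors (RhoRing R r), IsUnit (φ z)) ∧
      (∀ w : RhoRing (FractionRing R) (algebraMap R (FractionRing R) r),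
        ∃ z : RhoRing R r, ∃ u ∈ nonZeroDivisors (RhoRing R r), w * φ u = φ z) := by
  refine ⟨RhoRing.map (algebraMap R (FractionRing R)) r, RhoRing.map_mk _ r,
    RhoRing.map_injective (IsFractionRing.injective R (FractionRing R)),
    fun z hz => RhoRing.isUnit_map_of_mem_nonZeroDivisors
      (fun u hu => IsLocalization.map_units (FractionRing R) ⟨u, hu⟩) hz, fun w => ?_⟩
  obtain ⟨z, u, hu, hw⟩ := RhoRing.exists_mul_algebraMap_eq_map R⁰ w
  exact ⟨z, algebraMap R _ u, RhoRing.algebraMap_mem_nonZeroDivisors hu,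
    by rwa [RhoRing.map_algebraMap]⟩
end

section
/- Let R be a commutative ring with total quotient ring K = T(R), and let r ∈ R. For all f, g ∈ K[X], the polynomial F = f̄ + ḡ·ρ ∈ K[ρ][X] (where K[ρ] = K[T]/(T(T−r)) contains R[ρ] as a subring) satisfies F(z) ∈ R[ρ] for all z ∈ R[ρ] if and only if f ∈ Int(R; r) and g ∈ Int(R). That is, Int(R[ρ]) = Int(R; r) + Int(R)·ρ. -/
open Polynomial

/-- `IsDeltaWitness f G` says that `G = G(X,Y) ∈ S[X][Y]` is the (unique) two-variable
polynomial with `f(X+Y) − f(X) = Y·G(X,Y)`; then `Δ_c f = G(X,c)` for `c ∈ S`. -/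
def IsDeltaWitness {S : Type*} [CommRing S] (f : Polynomial S)
    (G : Polynomial (Polynomial S)) : Prop :=
  f.eval₂ (Polynomial.C.comp Polynomial.C) (Polynomial.C X + X) = Polynomial.C f + X * G

/-- The set `Int(R)` of integer-valued polynomials on `R`, over `K = T(R) = FractionRing R`. -/
def IntPoly (R : Type*) [CommRing R] : Set (Polynomial (FractionRing R)) :=
  {f | ∀ a : R, f.eval (algebraMap R (FractionRing R) a) ∈ Set.range (algebraMap R (FractionRing R))}

/-- The set `Int(R; r) = {f ∈ Int(R) : y·Δ_{yr}f ∈ Int(R) for all y ∈ R}`. -/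
def IntPolyRho (R : Type*) [CommRing R] (r : R) : Set (Polynomial (FractionRing R)) :=
  {f | f ∈ IntPoly R ∧ ∀ y : R, ∀ G, IsDeltaWitness f G →
    Polynomial.C (algebraMap R (FractionRing R) y) *
      G.eval (Polynomial.C (algebraMap R (FractionRing R) (y * r))) ∈ IntPoly R}

/-- The subring `R[ρ]` of `K[ρ]`, `K = T(R)`: the image of `R[T]`. -/
noncomputable def RhoBase (R : Type*) [CommRing R] (r : R) :
    Subring (RhoRing (FractionRing R) (algebraMap R (FractionRing R) r)) :=
  ((Ideal.Quotient.mk _ :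
      Polynomial (FractionRing R) →+*
        RhoRing (FractionRing R) (algebraMap R (FractionRing R) r)).comp
    (mapRingHom (algebraMap R (FractionRing R)))).range

/-! In `S[ρ]` we have `ρ² = sρ`, so `ρ · h(a + bρ) = ρ · h(a + bs)` for every polynomial `h`.
Together with `f(a + bρ) = f(a) + bρ · (Δ_{bρ} f)(a)` this gives
`F(a + bρ) = f(a) + (b · (Δ_{bs} f)(a) + g(a + bs)) · ρ`. Since `1, ρ` are linearly independent
over `K` and `R[ρ] = R + Rρ`, the value lies in `R[ρ]` iff both coordinates lie in `R`.
Taking `b = 0` gives `g ∈ Int(R)`, after which the second coordinate lies in `R` iff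
`b · (Δ_{bs} f)(a)` does. -/

section DeltaWitness

variable {S : Type*} [CommRing S]

theorem exists_isDeltaWitness (f : S[X]) : ∃ G, IsDeltaWitness f G := by
  have hΘ : (evalRingHom (0 : S[X])).comp (C.comp C) = C := by ext; simp
  have hshift : (f.eval₂ (C.comp C) (C X + X)).eval 0 = f := by
    rw [← coe_evalRingHom, hom_eval₂, hΘ]; simp
  obtain ⟨G, hG⟩ : X ∣ f.eval₂ (C.comp C) (C X + X) - C f := by
    rw [X_dvd_iff, coeff_zero_eq_eval_zero, eval_sub, hshift, eval_C, sub_self]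
  exact ⟨G, by rw [IsDeltaWitness, ← hG]; ring⟩

variable {A : Type*} [CommRing A]

theorem IsDeltaWitness.eval₂_add {f : S[X]} {G : S[X][X]} (hG : IsDeltaWitness f G)
    (φ : S →+* A) (a : S) (t : A) :
    f.eval₂ φ (φ a + t) = φ (f.eval a) + t * G.eval₂ (φ.comp (evalRingHom a)) t := by
  have hΘ : (eval₂RingHom (φ.comp (evalRingHom a)) t).comp (C.comp C) = φ := by ext; simp
  have h := congrArg (eval₂RingHom (φ.comp (evalRingHom a)) t) hG
  rw [hom_eval₂, hΘ] at h
  simpa using h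

end DeltaWitness

theorem mul_eval_eq_of_mul_eq {A : Type*} [CommRing A] {u v w : A} (h : u * v = u * w)
    (p : A[X]) : u * p.eval v = u * p.eval w := by
  obtain ⟨q, hq⟩ := sub_dvd_eval_sub v w p
  linear_combination u * hq + q * h

section MulSelf

variable {S A : Type*} [CommRing S] [CommRing A] {φ : S →+* A} {s : S} {ρ : A}

theorem mul_eval₂_add_mul_of_mul_self_eq (hρ : ρ * ρ = φ s * ρ) (p : S[X]) (a b : S) :
    ρ * p.eval₂ φ (φ a + φ b * ρ) = ρ * φ (p.eval (a + b * s)) := by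
  rw [← eval₂_at_apply, ← eval_map, ← eval_map]
  apply mul_eval_eq_of_mul_eq
  rw [map_add, map_mul]
  linear_combination φ b * hρ

theorem IsDeltaWitness.eval₂_add_mul_of_mul_self_eq (hρ : ρ * ρ = φ s * ρ) {f : S[X]}
    {G : S[X][X]} (hG : IsDeltaWitness f G) (a b : S) :
    f.eval₂ φ (φ a + φ b * ρ) = φ (f.eval a) + φ (b * (G.eval (C (b * s))).eval a) * ρ := by
  have hG' : ρ * G.eval₂ (φ.comp (evalRingHom a)) (φ b * ρ) =
      ρ * φ ((G.eval (C (b * s))).eval a) := by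
    have hbs : φ (b * s) = φ.comp (evalRingHom a) (C (b * s)) := by simp
    rw [← eval_map, mul_eval_eq_of_mul_eq (w := φ (b * s)), hbs, eval_map, eval₂_at_apply]
    · rfl
    · rw [map_mul]
      linear_combination φ b * hρ
  rw [hG.eval₂_add, map_mul]
  linear_combination φ b * hG'

theorem eval_map_add_map_mul_C_of_mul_self_eq (hρ : ρ * ρ = φ s * ρ) {f : S[X]}
    {G : S[X][X]} (hG : IsDeltaWitness f G) (g : S[X]) (a b : S) :
    (f.map φ + g.map φ * C ρ).eval (φ a + φ b * ρ) =
      φ (f.eval a) + φ (b * (G.eval (C (b * s))).eval a + g.eval (a + b * s)) * ρ := by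
  rw [eval_add, eval_mul, eval_C, eval_map, eval_map, hG.eval₂_add_mul_of_mul_self_eq hρ,
    mul_comm (eval₂ φ _ g) ρ, mul_eval₂_add_mul_of_mul_self_eq hρ, map_add]
  ring

theorem exists_eval₂_eq_add_mul_of_mul_self_eq (hρ : ρ * ρ = φ s * ρ) (p : S[X]) :
    ∃ a b, p.eval₂ φ ρ = φ a + φ b * ρ := by
  induction p using Polynomial.induction_on with
  | C a => exact ⟨a, 0, by simp⟩
  | add p q hp hq =>
    obtain ⟨a, b, hab⟩ := hp
    obtain ⟨c, d, hcd⟩ := hq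
    exact ⟨a + c, b + d, by rw [eval₂_add, hab, hcd]; simp only [map_add]; ring⟩
  | monomial n c h =>
    obtain ⟨a, b, hab⟩ := h
    refine ⟨0, a + b * s, ?_⟩
    rw [pow_succ, ← mul_assoc, eval₂_mul_X, hab, map_zero, map_add, map_mul]
    linear_combination φ b * hρ

end MulSelf

theorem Ideal.Quotient.mk_eq_eval₂ {S : Type*} [CommRing S] (I : Ideal S[X]) (p : S[X]) :
    Ideal.Quotient.mk I p = p.eval₂ ((Ideal.Quotient.mk I).comp C) (Ideal.Quotient.mk I X) := by
  rw [← hom_eval₂, eval₂_C_X]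

namespace RhoRing

variable {S : Type*} [CommRing S] (s : S)

theorem mk_X_mul_mk_X :
    (Ideal.Quotient.mk _ X * Ideal.Quotient.mk _ X : RhoRing S s) =
      (Ideal.Quotient.mk _).comp C s * Ideal.Quotient.mk _ X := by
  rw [RingHom.comp_apply, ← map_mul, ← map_mul, Ideal.Quotient.eq, Ideal.mem_span_singleton]
  exact ⟨1, by ring⟩

theorem eq_zero_of_add_mul_X_eq_zero {a b : S}
    (h : ((Ideal.Quotient.mk _).comp C a + (Ideal.Quotient.mk _).comp C b *
      Ideal.Quotient.mk _ X : RhoRing S s) = 0) : a = 0 ∧ b = 0 := by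
  rcases subsingleton_or_nontrivial S with _ | _
  · exact ⟨Subsingleton.elim _ _, Subsingleton.elim _ _⟩
  have hdvd : X * (X - C s) ∣ C a + C b * X := by
    rw [← Ideal.mem_span_singleton, ← Ideal.Quotient.eq_zero_iff_mem]
    simpa using h
  have hzero : C a + C b * X = 0 := by
    by_contra hne
    refine (monic_X.mul (monic_X_sub_C s)).not_dvd_of_natDegree_lt hne ?_ hdvd
    calc (C a + C b * X).natDegree ≤ 1 := by compute_degree
      _ < 2 := one_lt_two
      _ = (X * (X - C s)).natDegree := by symm; compute_degree!
  exact ⟨by simpa using congrArg (coeff · 0) hzero, by simpa using congrArg (coeff · 1) hzero⟩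

end RhoRing

section TotalQuotientRing

variable {R : Type*} [CommRing R] {r : R}

local notation "K" => FractionRing R
local notation "φ" => algebraMap R (FractionRing R)
local notation "𝔞" => Ideal.span {X * (X - C (algebraMap R (FractionRing R) r))}
local notation "ι" => RingHom.comp (Ideal.Quotient.mk 𝔞) (C (R := FractionRing R))
local notation "ρ" => Ideal.Quotient.mk 𝔞 X

theorem mem_rhoBase_iff (k₁ k₂ : K) :
    ι k₁ + ι k₂ * ρ ∈ RhoBase R r ↔ k₁ ∈ Set.range φ ∧ k₂ ∈ Set.range φ := by
  constructor
  · rintro ⟨p, hp⟩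
    have hρ : ρ * ρ = RingHom.comp ι φ r * ρ := RhoRing.mk_X_mul_mk_X (φ r)
    obtain ⟨a, b, hab⟩ := exists_eval₂_eq_add_mul_of_mul_self_eq (A := RhoRing K (φ r)) hρ p
    rw [RingHom.comp_apply, coe_mapRingHom, Ideal.Quotient.mk_eq_eval₂, eval₂_map, hab] at hp
    obtain ⟨h₁, h₂⟩ : φ a - k₁ = 0 ∧ φ b - k₂ = 0 := by
      refine RhoRing.eq_zero_of_add_mul_X_eq_zero (φ r) ?_
      rw [map_sub, map_sub]
      linear_combination hp
    exact ⟨⟨a, sub_eq_zero.1 h₁⟩, ⟨b, sub_eq_zero.1 h₂⟩⟩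
  · rintro ⟨⟨a, rfl⟩, ⟨b, rfl⟩⟩
    exact ⟨C a + C b * X, by simp⟩

theorem eval_mem_rhoBase_iff {f : K[X]} {G : K[X][X]} (hG : IsDeltaWitness f G) (g : K[X])
    (x y : R) :
    ((f.map ι + g.map ι * C ρ).eval (Ideal.Quotient.mk _ (C (φ x) + C (φ y) * X)) :
        RhoRing K (φ r)) ∈ RhoBase R r ↔
      f.eval (φ x) ∈ Set.range φ ∧
        (C (φ y) * G.eval (C (φ (y * r)))).eval (φ x) + g.eval (φ (x + y * r)) ∈ Set.range φ := by
  have hz : (Ideal.Quotient.mk _ (C (φ x) + C (φ y) * X) : RhoRing K (φ r)) =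
      ι (φ x) + ι (φ y) * ρ := by
    simp
  rw [hz, eval_map_add_map_mul_C_of_mul_self_eq (RhoRing.mk_X_mul_mk_X (φ r)) hG, mem_rhoBase_iff]
  simp only [eval_mul, eval_C, map_add, map_mul]

end TotalQuotientRing

/-- For `f, g ∈ K[X]` (`K = T(R)`) and `F = f̄ + ḡ·ρ ∈ K[ρ][X]`,
`F` maps `R[ρ]` into `R[ρ]` iff `f ∈ Int(R; r)` and `g ∈ Int(R)`.  That is,
`Int(R[ρ]) = Int(R; r) + Int(R)·ρ`. -/
theorem intPoly_rhoRing (R : Type*) [CommRing R] (r : R)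
    (f g : Polynomial (FractionRing R)) :
    (∀ x y : R,
        ((f.map ((Ideal.Quotient.mk _).comp (Polynomial.C (R := FractionRing R))) +
            g.map ((Ideal.Quotient.mk _).comp (Polynomial.C (R := FractionRing R))) *
              Polynomial.C (Ideal.Quotient.mk _ X)).eval
          (Ideal.Quotient.mk _
            (Polynomial.C (algebraMap R (FractionRing R) x) +
              Polynomial.C (algebraMap R (FractionRing R) y) * X))
          : RhoRing (FractionRing R) (algebraMap R (FractionRing R) r)) ∈ RhoBase R r)
      ↔ f ∈ IntPolyRho R r ∧ g ∈ IntPoly R := by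
  obtain ⟨G, hG⟩ := exists_isDeltaWitness f
  constructor
  · intro H
    have hg : g ∈ IntPoly R := fun x => by
      simpa using ((eval_mem_rhoBase_iff hG g x 0).1 (H x 0)).2
    refine ⟨⟨fun x => ((eval_mem_rhoBase_iff hG g x 0).1 (H x 0)).1, fun y G' hG' x => ?_⟩, hg⟩
    simpa using (algebraMap R (FractionRing R)).range.sub_mem
      ((eval_mem_rhoBase_iff hG' g x y).1 (H x y)).2 (hg (x + y * r))
  · rintro ⟨⟨hf, hfΔ⟩, hg⟩ x y
    exact (eval_mem_rhoBase_iff hG g x y).2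
      ⟨hf x, (algebraMap R (FractionRing R)).range.add_mem (hfΔ y G hG x) (hg (x + y * r))⟩
end

section
/- Let R be a commutative ring with total quotient ring K = T(R), and let n be a positive integer. Consider the idealization R(+)Rⁿ ≅ R[δ₁,…,δₙ] = R[T₁,…,Tₙ]/(T₁,…,Tₙ)², viewed inside K(+)Kⁿ. For f ∈ K[X] and h₁,…,hₙ ∈ K[X], the polynomial F = f + Σᵢ hᵢδᵢ satisfies: (1) F(x) ∈ R(+)Rⁿ for all x ∈ R if and only if f ∈ Int(R) and hᵢ ∈ Int(R) for all i; and (2) F(z) ∈ R(+)Rⁿ for all z ∈ R(+)Rⁿ if and only if f ∈ Int^(1)(R) and hᵢ ∈ Int(R) for all i. That is, Int(R, R[δ₁,…,δₙ]) = Int(R)[δ₁,…,δₙ] and Int(R[δ₁,…,δₙ]) = Int^(1)(R) ⊕ ⊕ᵢ Int(R)·δᵢ. -/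
/-!
Over the dual numbers `K(+)Kⁿ` a polynomial is its own first-order Taylor expansion:
`F(a + w) = f(a) + Σⱼ (f'(a) wⱼ + hⱼ(a)) δⱼ`. Taking `w = 0` gives both directions of (1) and
shows `f, hⱼ ∈ Int(R)` in (2); taking `w = (1, …, 1)` (possible since `n ≥ 1`) then yields
`f'(a) = (f'(a) + h₀(a)) - h₀(a) ∈ R`.
-/

open Polynomial TrivSqZeroExt

/-- Membership in the subring `R(+)Rⁿ` of `K(+)Kⁿ`, `K = T(R)`: all components lie in the
image of `R`. -/
def MemIdealizationBase (R : Type*) [CommRing R] (n : ℕ)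
    (z : TrivSqZeroExt (FractionRing R) (Fin n → FractionRing R)) : Prop :=
  z.fst ∈ Set.range (algebraMap R (FractionRing R)) ∧
    ∀ i : Fin n, z.snd i ∈ Set.range (algebraMap R (FractionRing R))

theorem eval_map_inlHom_inl_add_inr {K M : Type*} [CommRing K] [AddCommGroup M] [Module K M]
    [Module Kᵐᵒᵖ M] [IsCentralScalar K M] (f : K[X]) (a : K) (w : M) :
    (f.map (inlHom K M)).eval (inl a + inr w)
      = inl (f.eval a) + inr ((derivative f).eval a • w) := by
  induction f using Polynomial.induction_on' with
  | add p q hp hq =>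
    simp only [Polynomial.map_add, eval_add, hp, hq, derivative_add, add_smul, inl_add, inr_add]
    abel
  | monomial k b =>
    rw [map_monomial, eval_monomial, derivative_monomial]
    show inl b * _ ^ _ = _
    ext
    · simp [fst_pow]
    · simp only [snd_mul, snd_inl, fst_inl, snd_pow, fst_pow, fst_add, fst_inr, snd_add, snd_inr,
        smul_zero, add_zero, zero_add, eval_monomial, Nat.pred_eq_sub_one]
      rw [smul_comm, ← Nat.cast_smul_eq_nsmul K, smul_smul, smul_smul]
      ring_nf

theorem eval_map_inlHom_add_sum_inr_single {K ι : Type*} [CommRing K] [Fintype ι]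
    [DecidableEq ι] (f : K[X]) (h : ι → K[X]) (a : K) (w : ι → K) :
    (f.map (inlHom K (ι → K)) +
        ∑ i, (h i).map (inlHom K (ι → K)) * C (inr (Pi.single i 1))).eval (inl a + inr w)
      = inl (f.eval a) + inr (fun j => (derivative f).eval a * w j + (h j).eval a) := by
  have eval_term (g : K[X]) (i : ι) :
      (g.map (inlHom K (ι → K)) * C (inr (Pi.single i 1))).eval (inl a + inr w)
        = inr (Pi.single i (g.eval a)) := by
    rw [eval_mul, eval_C, eval_map_inlHom_inl_add_inr, add_mul, inl_mul_inr, inr_mul_inr,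
      add_zero, ← Pi.single_smul', smul_eq_mul, mul_one]
  rw [eval_add, eval_finsetSum, eval_map_inlHom_inl_add_inr]
  simp only [eval_term, ← inr_sum, Finset.univ_sum_single, add_assoc, ← inr_add]
  rfl

theorem eval_map_inlHom_add_sum_inr_single_inl {K ι : Type*} [CommRing K] [Fintype ι]
    [DecidableEq ι] (f : K[X]) (h : ι → K[X]) (a : K) :
    (f.map (inlHom K (ι → K)) +
        ∑ i, (h i).map (inlHom K (ι → K)) * C (inr (Pi.single i 1))).eval (inl a)
      = inl (f.eval a) + inr (fun j => (h j).eval a) := by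
  simpa using eval_map_inlHom_add_sum_inr_single f h a 0

theorem memIdealizationBase_inl_add_inr_iff {R : Type*} [CommRing R] {n : ℕ}
    (a : FractionRing R) (w : Fin n → FractionRing R) :
    MemIdealizationBase R n (inl a + inr w) ↔
      a ∈ Set.range (algebraMap R (FractionRing R)) ∧
        ∀ i, w i ∈ Set.range (algebraMap R (FractionRing R)) := by
  simp [MemIdealizationBase]

/-- Let `K = T(R)`, `n ≥ 1`, and consider
`R(+)Rⁿ ≅ R[δ₁,…,δₙ] = R[T₁,…,Tₙ]/(T₁,…,Tₙ)²` inside `K(+)Kⁿ`.  For `f, h₁, …, hₙ ∈ K[X]`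
and `F = f + Σᵢ hᵢδᵢ`:
(1) `F(x) ∈ R(+)Rⁿ` for all `x ∈ R` iff `f ∈ Int(R)` and all `hᵢ ∈ Int(R)`, i.e.
`Int(R, R[δ₁,…,δₙ]) = Int(R)[δ₁,…,δₙ]`; and
(2) `F(z) ∈ R(+)Rⁿ` for all `z ∈ R(+)Rⁿ` iff `f ∈ Int⁽¹⁾(R)` and all `hᵢ ∈ Int(R)`, i.e.
`Int(R[δ₁,…,δₙ]) = Int⁽¹⁾(R) ⊕ ⊕ᵢ Int(R)·δᵢ`. -/
theorem intPoly_idealization_pow (R : Type*) [CommRing R] (n : ℕ) (hn : 0 < n)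
    (f : Polynomial (FractionRing R)) (h : Fin n → Polynomial (FractionRing R)) :
    ((∀ x : R,
        MemIdealizationBase R n
          ((f.map (inlHom (FractionRing R) (Fin n → FractionRing R)) +
              ∑ i : Fin n,
                (h i).map (inlHom (FractionRing R) (Fin n → FractionRing R)) *
                  Polynomial.C (inr (Pi.single i 1))).eval
            (inl (algebraMap R (FractionRing R) x))))
      ↔ f ∈ IntPoly R ∧ ∀ i, h i ∈ IntPoly R) ∧
    ((∀ (x : R) (v : Fin n → R),
        MemIdealizationBase R n
          ((f.map (inlHom (FractionRing R) (Fin n → FractionRing R)) +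
              ∑ i : Fin n,
                (h i).map (inlHom (FractionRing R) (Fin n → FractionRing R)) *
                  Polynomial.C (inr (Pi.single i 1))).eval
            (inl (algebraMap R (FractionRing R) x) +
              inr (fun i => algebraMap R (FractionRing R) (v i)))))
      ↔ f ∈ IntPoly R ∧ derivative f ∈ IntPoly R ∧ ∀ i, h i ∈ IntPoly R) := by
  simp only [eval_map_inlHom_add_sum_inr_single_inl, eval_map_inlHom_add_sum_inr_single,
    memIdealizationBase_inl_add_inr_iff]
  refine ⟨by simp only [IntPoly, forall_and, forall_comm (α := R)]; rfl, ?_⟩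
  constructor
  · intro H
    have hf : f ∈ IntPoly R := fun a => (H a 0).1
    have hh (i : Fin n) : h i ∈ IntPoly R := fun a => by simpa using (H a 0).2 i
    refine ⟨hf, fun a => ?_, hh⟩
    have hsum : (derivative f).eval (algebraMap R _ a) + (h ⟨0, hn⟩).eval (algebraMap R _ a)
        ∈ (algebraMap R (FractionRing R)).range := by
      simpa using (H a 1).2 ⟨0, hn⟩
    simpa using sub_mem hsum (hh ⟨0, hn⟩ a)
  · rintro ⟨hf, hf', hh⟩ x v
    exact ⟨hf x, fun j => add_mem (s := (algebraMap R (FractionRing R)).range)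
      (mul_mem (hf' x) ⟨v j, rfl⟩) (hh j x)⟩
end
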